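/- Let γ ≥ 1/2, Q(x,y) = |y|^γ, and let Ω ⊆ [a,b] × [c,d] be an open set with 0 < a < b, 0 ≤ c < d ≤ 1. Let F_t(x,y) = (x, y + t x). Then the function t ↦ ∫_{F_{−t}(Ω)} Q(z)² dz satisfies (d/dt)|_{t=0} ∫_{F_{−t}(Ω)} Q² dz ≤ −a · ∫_Ω Q² dz. -/

import Mathlib

open Real MeasureTheory

/-!
After the shear change of variables the integral becomes `∫_Ω |y - t x|^{2γ}`. Since `2γ ≥ 1`,
`t ↦ |y - t x|^{2γ}` is Lipschitz near `0` uniformly on the bounded set `Ω`, so we may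
differentiate under the integral sign. An open set lying in `{y ≥ c ≥ 0}` lies in `{y > 0}`,
so the derivative at `0` is `-∫_Ω 2γ x y^{2γ-1}`, and pointwise `2γ x y^{2γ-1} ≥ a y^{2γ}`
because `x ≥ a`, `2γ ≥ 1` and `0 < y ≤ 1`.
-/

def shear (s : ℝ) : ℝ × ℝ ≃ₜ ℝ × ℝ where
  toFun z := (z.1, z.2 + s * z.1)
  invFun z := (z.1, z.2 - s * z.1)
  left_inv z := by simp
  right_inv z := by simp

theorem measurePreserving_shear (s : ℝ) : MeasurePreserving (shear s) volume volume := by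
  rw [Measure.volume_eq_prod]
  exact (MeasurePreserving.id volume).skew_product (g := fun x y => y + s * x) (by fun_prop)
    (.of_forall fun x => map_add_right_eq_self volume (s * x))

theorem setIntegral_shear_image (s : ℝ) (Ω : Set (ℝ × ℝ)) (g : ℝ × ℝ → ℝ) :
    ∫ z in (fun z : ℝ × ℝ => (z.1, z.2 + s * z.1)) '' Ω, g z
      = ∫ z in Ω, g (z.1, z.2 + s * z.1) :=
  (measurePreserving_shear s).setIntegral_image_emb (shear s).measurableEmbedding g Ω

theorem lipschitzOnWith_abs_rpow {p : ℝ} (hp : 1 ≤ p) (R : ℝ) :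
    LipschitzOnWith (p * R ^ (p - 1)).toNNReal (fun u : ℝ => |u| ^ p) (Set.Icc (-R) R) := by
  have hrpow : LipschitzOnWith (p * R ^ (p - 1)).toNNReal (fun u : ℝ => u ^ p) (Set.Icc 0 R) := by
    refine (convex_Icc 0 R).lipschitzOnWith_of_nnnorm_hasDerivWithin_le
      (fun u _ => (hasDerivAt_rpow_const (Or.inr hp)).hasDerivWithinAt) fun u hu => ?_
    have hp0 : 0 ≤ p := by linarith
    rw [← NNReal.coe_le_coe, coe_nnnorm, norm_of_nonneg (mul_nonneg hp0 (rpow_nonneg hu.1 _))]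
    exact (mul_le_mul_of_nonneg_left (rpow_le_rpow hu.1 hu.2 (by linarith)) hp0).trans
      (le_coe_toNNReal _)
  have habs : Set.MapsTo (fun u : ℝ => |u|) (Set.Icc (-R) R) (Set.Icc 0 R) :=
    fun u hu => ⟨abs_nonneg u, abs_le.2 hu⟩
  simpa [Function.comp_def] using
    hrpow.comp (lipschitzWith_one_norm (E := ℝ)).lipschitzOnWith habs

theorem lipschitzOnWith_abs_sub_mul_rpow {p x y b B : ℝ} (hp : 1 ≤ p) (hx : |x| ≤ b)
    (hy : |y| ≤ B) :
    LipschitzOnWith (nnabs (p * (B + b) ^ (p - 1) * b)) (fun t => |y - t * x| ^ p)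
      (Metric.ball 0 1) := by
  have hlin : LipschitzWith (nnabs x) (fun t : ℝ => y - t * x) :=
    .of_dist_le_mul fun t s => by
      rw [coe_nnabs, dist_eq, dist_eq, abs_sub_comm t s, ← abs_mul]
      exact le_of_eq (congrArg abs (by ring))
  have hmaps : Set.MapsTo (fun t : ℝ => y - t * x) (Metric.ball 0 1)
      (Set.Icc (-(B + b)) (B + b)) := by
    intro t ht
    rw [Metric.mem_ball, dist_zero_right, norm_eq_abs] at ht
    have htx : |t * x| ≤ b := by
      rw [abs_mul]; exact (mul_le_of_le_one_left (abs_nonneg x) ht.le).trans hx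
    exact abs_le.1 ((abs_sub _ _).trans (add_le_add hy htx))
  refine ((lipschitzOnWith_abs_rpow hp (B + b)).comp hlin.lipschitzOnWith hmaps).weaken ?_
  rw [← NNReal.coe_le_coe]
  have hC : 0 ≤ p * (B + b) ^ (p - 1) := by
    have : 0 ≤ B + b := by linarith [abs_nonneg x, abs_nonneg y]
    positivity
  push_cast
  rw [coe_toNNReal _ hC, abs_of_nonneg (mul_nonneg hC ((abs_nonneg x).trans hx))]
  exact mul_le_mul_of_nonneg_left hx hC

theorem hasDerivAt_abs_sub_mul_rpow {x y : ℝ} (p : ℝ) (hy : 0 < y) :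
    HasDerivAt (fun t => |y - t * x| ^ p) (-x * p * y ^ (p - 1)) 0 := by
  have hlin : HasDerivAt (fun t : ℝ => y - t * x) (-x) 0 := by
    simpa using ((hasDerivAt_id (0 : ℝ)).mul_const x).const_sub y
  have hpos : ∀ᶠ t in nhds (0 : ℝ), 0 < y - t * x :=
    hlin.continuousAt.eventually (eventually_gt_nhds (by simpa using hy))
  have hrpow : HasDerivAt (fun t => (y - t * x) ^ p) (-x * p * y ^ (p - 1)) 0 := by
    simpa using hlin.rpow_const (p := p) (Or.inl (by simpa using hy.ne'))
  exact hrpow.congr_of_eventuallyEq (hpos.mono fun t ht => by simp only [abs_of_pos ht])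

theorem integrable_abs_snd_rpow {μ : Measure (ℝ × ℝ)} [IsFiniteMeasure μ] {p B : ℝ}
    (hp : 0 ≤ p) (hμ : ∀ᵐ z ∂μ, |z.2| ≤ B) : Integrable (fun z : ℝ × ℝ => |z.2| ^ p) μ := by
  refine .of_bound (Measurable.aestronglyMeasurable (by fun_prop)) (B ^ p)
    (hμ.mono fun z hz => ?_)
  rw [norm_of_nonneg (by positivity)]
  exact rpow_le_rpow (abs_nonneg _) hz hp

theorem hasDerivAt_integral_abs_sub_mul_rpow (μ : Measure (ℝ × ℝ)) [IsFiniteMeasure μ]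
    {p b B : ℝ} (hp : 1 ≤ p) (hμ : ∀ᵐ z ∂μ, |z.1| ≤ b ∧ 0 < z.2 ∧ z.2 ≤ B) :
    Integrable (fun z : ℝ × ℝ => -z.1 * p * z.2 ^ (p - 1)) μ ∧
      HasDerivAt (fun t => ∫ z, |z.2 - t * z.1| ^ p ∂μ)
        (∫ z, -z.1 * p * z.2 ^ (p - 1) ∂μ) 0 := by
  have hF_int : Integrable (fun z : ℝ × ℝ => |z.2 - 0 * z.1| ^ p) μ := by
    simpa using integrable_abs_snd_rpow (by linarith)
      (hμ.mono fun z ⟨_, hy, hyB⟩ => abs_le.2 ⟨by linarith, hyB⟩)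
  refine hasDerivAt_integral_of_dominated_loc_of_lip (F := fun t z => |z.2 - t * z.1| ^ p)
    (Metric.ball_mem_nhds 0 one_pos)
    (.of_forall fun t => Measurable.aestronglyMeasurable (by fun_prop)) hF_int
    (Measurable.aestronglyMeasurable (by fun_prop))
    (hμ.mono fun z ⟨hx, hy, hyB⟩ => ?_) (integrable_const (p * (B + b) ^ (p - 1) * b))
    (hμ.mono fun z ⟨_, hy, _⟩ => hasDerivAt_abs_sub_mul_rpow p hy)
  exact lipschitzOnWith_abs_sub_mul_rpow hp hx (abs_le.2 ⟨by linarith, hyB⟩)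

theorem IsOpen.subset_preimage_snd_Ioi {X : Type*} [TopologicalSpace X] {Ω : Set (X × ℝ)}
    {c : ℝ} (hΩ : IsOpen Ω) (h : Ω ⊆ Prod.snd ⁻¹' Set.Ici c) : Ω ⊆ Prod.snd ⁻¹' Set.Ioi c := by
  simpa [hΩ.interior_eq, ← isOpenMap_snd.preimage_interior_eq_interior_preimage continuous_snd]
    using interior_mono h

theorem mul_rpow_le_mul_mul_rpow_sub_one {a x y p : ℝ} (ha : 0 ≤ a) (hax : a ≤ x) (hy : 0 < y)
    (hy1 : y ≤ 1) (hp : 1 ≤ p) : a * y ^ p ≤ x * p * y ^ (p - 1) := by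
  have hyp : y ^ p ≤ y ^ (p - 1) := rpow_le_rpow_of_exponent_ge hy hy1 (by linarith)
  have hyp1 : 0 ≤ y ^ (p - 1) := by positivity
  calc a * y ^ p ≤ x * y ^ (p - 1) := mul_le_mul hax hyp (rpow_pos_of_pos hy p).le (ha.trans hax)
    _ ≤ x * p * y ^ (p - 1) := by
      rw [mul_right_comm]; exact le_mul_of_one_le_right (mul_nonneg (ha.trans hax) hyp1) hp

theorem stmt_5_general (γ a b c d : ℝ) (hγ : 1 / 2 ≤ γ) (ha : 0 < a)
    (hc : 0 ≤ c) (hd : d ≤ 1)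
    (Ω : Set (ℝ × ℝ)) (hΩopen : IsOpen Ω) (hΩ : Ω ⊆ Set.Icc a b ×ˢ Set.Icc c d) :
    deriv (fun t : ℝ =>
        ∫ z in (fun z : ℝ × ℝ => (z.1, z.2 + (-t) * z.1)) '' Ω, (|z.2| ^ γ) ^ 2) 0
      ≤ -a * ∫ z in Ω, (|z.2| ^ γ) ^ 2 := by
  have hp : 1 ≤ 2 * γ := by linarith
  have hQ (y : ℝ) : (|y| ^ γ) ^ 2 = |y| ^ (2 * γ) := by
    rw [← rpow_mul_natCast (abs_nonneg y), Nat.cast_ofNat, mul_comm]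
  have hy : Ω ⊆ Prod.snd ⁻¹' Set.Ioi 0 := fun z hz =>
    hc.trans_lt (hΩopen.subset_preimage_snd_Ioi (fun z hz => (hΩ hz).2.1) hz)
  have hΩ_box : Ω ⊆ Set.Icc a b ×ˢ Set.Icc c 1 :=
    hΩ.trans (Set.prod_mono le_rfl (Set.Icc_subset_Icc_right hd))
  have : IsFiniteMeasure (volume.restrict Ω) := isFiniteMeasure_restrict.2
    ((measure_mono hΩ_box).trans_lt (isCompact_Icc.prod isCompact_Icc).measure_lt_top).ne
  obtain ⟨hF'_int, hderiv⟩ := hasDerivAt_integral_abs_sub_mul_rpow (volume.restrict Ω) hp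
    (b := b) (B := 1) <| ae_restrict_of_forall_mem hΩopen.measurableSet fun z hz =>
      ⟨(abs_of_pos (ha.trans_le (hΩ_box hz).1.1)).trans_le (hΩ_box hz).1.2, hy hz,
        (hΩ_box hz).2.2⟩
  have hQ_int : IntegrableOn (fun z : ℝ × ℝ => |z.2| ^ (2 * γ)) Ω :=
    integrable_abs_snd_rpow (B := 1) (by linarith) <| ae_restrict_of_forall_mem
      hΩopen.measurableSet fun z hz => (abs_of_pos (hy hz)).trans_le (hΩ_box hz).2.2
  have hshear : (fun t : ℝ =>
      ∫ z in (fun z : ℝ × ℝ => (z.1, z.2 + (-t) * z.1)) '' Ω, (|z.2| ^ γ) ^ 2) =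
      fun t => ∫ z in Ω, |z.2 - t * z.1| ^ (2 * γ) := by
    ext t
    rw [setIntegral_shear_image]
    simp only [hQ, neg_mul, ← sub_eq_add_neg]
  rw [hshear, hderiv.deriv]
  simp only [hQ, ← integral_const_mul]
  refine setIntegral_mono_on hF'_int (hQ_int.const_mul (-a)) hΩopen.measurableSet fun z hz => ?_
  rw [abs_of_pos (hy hz), neg_mul, neg_mul, neg_mul, neg_le_neg_iff]
  exact mul_rpow_le_mul_mul_rpow_sub_one ha.le (hΩ_box hz).1.1 (hy hz) (hΩ_box hz).2.2 hp

/-- decrease estimate, `γ ≥ 1/2`: with `Q(x,y) = |y|^γ`, `Ω ⊆ [a,b]×[c,d]`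
open, `0 < a < b`, `0 ≤ c < d ≤ 1`, and `F_{−t}(Ω) = {(x, y − t x) : (x,y) ∈ Ω}`,
`(d/dt)|_{t=0} ∫_{F_{−t}(Ω)} Q² ≤ −a ∫_Ω Q²`. -/
theorem stmt_5 (γ a b c d : ℝ) (hγ : 1 / 2 ≤ γ) (ha : 0 < a) (hab : a < b)
    (hc : 0 ≤ c) (hcd : c < d) (hd : d ≤ 1)
    (Ω : Set (ℝ × ℝ)) (hΩopen : IsOpen Ω) (hΩ : Ω ⊆ Set.Icc a b ×ˢ Set.Icc c d) :
    deriv (fun t : ℝ =>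
        ∫ z in (fun z : ℝ × ℝ => (z.1, z.2 + (-t) * z.1)) '' Ω, (|z.2| ^ γ) ^ 2) 0
      ≤ -a * ∫ z in Ω, (|z.2| ^ γ) ^ 2 :=
  stmt_5_general γ a b c d hγ ha hc hd Ω hΩopen hΩ
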